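/- arXiv:2011.05474 — 7 statements merged into one kernel-verified Lean document; each statement's English description precedes it below -/
import Mathlib

section
/- Let n be an odd natural number, let S ⊆ {1,…,n} with |S| ≤ ⌊n/2⌋, let a_i (i ∈ S) be real coefficients and δ a real number. If the inequality ∑_{i∈S} a_i x_i ≤ δ holds for every x ∈ {0,1}^n with ∑_{i=1}^n x_i ≤ ⌊n/2⌋, then it holds for every x ∈ {0,1}^n. -/
/-- Theorem 1.3 (second part): for `n` odd and `S ⊆ {1,…,n}` of size at most `⌊n/2⌋`,
any inequality `∑_{i∈S} a i * x i ≤ δ` that is valid for all 0/1 points `x` with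
`∑ x i ≤ ⌊n/2⌋` is in fact valid for all points of the 0/1 cube. -/
theorem sparse_cut_trivial (n : ℕ) (hn : Odd n) (S : Finset (Fin n))
    (hS : S.card ≤ n / 2) (a : Fin n → ℝ) (δ : ℝ)
    (h : ∀ x : Fin n → ℝ, (∀ i, x i = 0 ∨ x i = 1) →
      (∑ i, x i) ≤ (n / 2 : ℕ) → ∑ i ∈ S, a i * x i ≤ δ) :
    ∀ x : Fin n → ℝ, (∀ i, x i = 0 ∨ x i = 1) → ∑ i ∈ S, a i * x i ≤ δ := by
  intro x hx
  set y : Fin n → ℝ := fun i => if i ∈ S then x i else 0 with hy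
  have hy01 : ∀ i, y i = 0 ∨ y i = 1 := by
    intro i
    by_cases hi : i ∈ S <;> simp [hy, hi, hx i]
  have hsum : (∑ i, y i) ≤ (n / 2 : ℕ) := by
    have : (∑ i, y i) = ∑ i ∈ S, x i := by
      rw [← Finset.sum_subset (Finset.subset_univ S)]
      · exact Finset.sum_congr rfl (fun i hi => by simp [hy, hi])
      · intro i _ hi; simp [hy, hi]
    rw [this]
    calc ∑ i ∈ S, x i ≤ ∑ i ∈ S, 1 := by
          refine Finset.sum_le_sum fun i _ => ?_
          rcases hx i with h0 | h0 <;> rw [h0] <;> norm_num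
      _ = S.card := by simp
      _ ≤ (n / 2 : ℕ) := by exact_mod_cast hS
  have := h y hy01 hsum
  calc ∑ i ∈ S, a i * x i = ∑ i ∈ S, a i * y i :=
        Finset.sum_congr rfl (fun i hi => by simp [hy, hi])
    _ ≤ δ := this
end

section
/- Let n be an odd natural number, let a ∈ ℤ^n have support T with t := |T| satisfying 1 ≤ t ≤ ⌊n/2⌋, let ℓ ∈ T, and let b ∈ ℤ. Then the number of vectors x ∈ ℝ^n with x_ℓ = 1/2, x_i ∈ {0,1} for all i ≠ ℓ, exactly (n−1)/2 coordinates equal to 1, and ⟨a, x⟩ = b + 1/2 is at most C(t−1, ⌊t/2⌋) · C(n−t, (n−1)/2 − ⌊t/2⌋). -/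
/-!
Sending `x` to `S = {i | x i = 1}` identifies the points counted with the `(n-1)/2`-subsets `S`
of the coordinates other than `ℓ` satisfying `∑_{i ∈ S} a_i = b + 1/2 - a_ℓ/2`. Such an `S` is
determined by `S ∩ (T \ {ℓ})`, a subset of `T \ {ℓ}` with prescribed `a`-sum, and by `S \ T`, a
subset of the complement of `T` of prescribed size. Erdős's form of the Littlewood–Offord lemma
bounds the first choice by `C(t-1, ⌊(t-1)/2⌋)`: taking the symmetric difference with the set of
negative coefficients turns a level set of the subset sums into an antichain, so Sperner's theorem
applies. The second choice is bounded by the middle binomial `C(n-t, ⌊(n-t)/2⌋)`, and for odd `n`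
the two middle binomials are those of the statement.
-/

open Finset

theorem Nat.choose_div_two_eq_choose_succ_div_two (N : ℕ) :
    N.choose (N / 2) = N.choose ((N + 1) / 2) := by
  obtain ⟨k, rfl | rfl⟩ := N.even_or_odd'
  · congr 1; omega
  · rw [show (2 * k + 1) / 2 = k by omega, show (2 * k + 1 + 1) / 2 = k + 1 by omega,
      Nat.choose_symm_half]

variable {α β : Type*} [DecidableEq α]

theorem IsAntichain.card_le_of_subset_powerset {s : Finset α} {𝒜 : Finset (Finset α)}
    (h𝒜s : 𝒜 ⊆ s.powerset) (h𝒜 : IsAntichain (· ⊆ ·) (𝒜 : Set (Finset α))) :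
    #𝒜 ≤ (#s).choose (#s / 2) := by
  have hmap : ∀ A ∈ 𝒜, (A.subtype (· ∈ s)).map (Function.Embedding.subtype _) = A :=
    fun A hA => subtype_map_of_mem fun _ hx => mem_powerset.1 (h𝒜s hA) hx
  have hinj : Set.InjOn (fun A : Finset α => A.subtype (· ∈ s)) 𝒜 := fun A hA B hB hAB => by
    rw [← hmap A hA, ← hmap B hB]; exact congrArg _ hAB
  rw [← card_image_of_injOn hinj, ← Fintype.card_coe s]
  refine IsAntichain.sperner ?_
  simp only [coe_image]
  rintro _ ⟨A, hA, rfl⟩ _ ⟨B, hB, rfl⟩ hne hAB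
  refine h𝒜 hA hB (fun h => hne (congrArg _ h)) ?_
  rw [← hmap A hA, ← hmap B hB]
  exact map_subset_map.2 hAB

theorem card_powersetCard_filter_inter_eq_le (U R A : Finset α) (m : ℕ) :
    #{S ∈ U.powersetCard m | S ∩ R = A} ≤ (#(U \ R)).choose (m - #A) := by
  rw [← card_powersetCard]
  refine card_le_card_of_injOn (· \ R) (fun S hS => ?_) fun S hS S' hS' hSS' => ?_
  · simp only [mem_coe, mem_filter, mem_powersetCard] at hS
    obtain ⟨⟨hSU, rfl⟩, rfl⟩ := hS
    exact mem_powersetCard.2 ⟨sdiff_subset_sdiff hSU subset_rfl,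
      Nat.eq_sub_of_add_eq (card_sdiff_add_card_inter S R)⟩
  · simp only [mem_coe, mem_filter] at hS hS'
    rw [← sdiff_union_inter S R, ← sdiff_union_inter S' R, hS.2, hS'.2]
    exact congrArg (· ∪ A) hSS'

section OrderedGroup

variable [AddCommGroup β] [LinearOrder β] [IsOrderedAddMonoid β]

theorem sum_abs_symmDiff_filter_neg {s A : Finset α} (hA : A ⊆ s) (g : α → β) :
    ∑ i ∈ symmDiff A {i ∈ s | g i < 0}, |g i| = ∑ i ∈ A, g i - ∑ i ∈ s with g i < 0, g i := by
  have hsymm : symmDiff A {i ∈ s | g i < 0} ⊆ s :=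
    symmDiff_le_sup.trans (union_subset hA (filter_subset _ _))
  rw [eq_sub_iff_add_eq, ← inter_eq_right.2 hsymm, ← inter_eq_right.2 hA, ← sum_ite_mem,
    ← sum_ite_mem, sum_filter, ← sum_add_distrib]
  refine sum_congr rfl fun i hi => ?_
  by_cases hiA : i ∈ A <;> by_cases hgi : g i < 0 <;>
    simp [mem_symmDiff, hi, hiA, hgi, abs_of_neg, abs_of_nonneg, le_of_not_gt]

theorem card_powerset_filter_sum_eq_le {s : Finset α} {g : α → β} (hg : ∀ i ∈ s, g i ≠ 0)
    (c : β) : #{A ∈ s.powerset | ∑ i ∈ A, g i = c} ≤ (#s).choose (#s / 2) := by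
  set N := {i ∈ s | g i < 0}
  have hN : ∀ A ∈ s.powerset, symmDiff A N ⊆ s := fun A hA =>
    symmDiff_le_sup.trans (union_subset (mem_powerset.1 hA) (filter_subset _ _))
  rw [← card_image_of_injective _ (symmDiff_left_injective N)]
  refine IsAntichain.card_le_of_subset_powerset ?_ ?_
  · simp only [subset_iff, mem_image, mem_filter]
    rintro _ ⟨A, ⟨hA, -⟩, rfl⟩
    exact mem_powerset.2 (hN A hA)
  · simp only [coe_image, coe_filter]
    rintro _ ⟨A, ⟨hA, hAc⟩, rfl⟩ _ ⟨B, ⟨hB, hBc⟩, rfl⟩ hne hAB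
    obtain ⟨i, hiB, hiA⟩ := exists_of_ssubset (Finset.ssubset_iff_subset_ne.2 ⟨hAB, hne⟩)
    have hlt := sum_lt_sum_of_subset hAB hiB hiA (abs_pos.2 (hg i (hN B hB hiB)))
      fun j _ _ => abs_nonneg (g j)
    rw [sum_abs_symmDiff_filter_neg (mem_powerset.1 hA),
      sum_abs_symmDiff_filter_neg (mem_powerset.1 hB), hAc, hBc] at hlt
    exact lt_irrefl _ hlt

theorem card_powersetCard_filter_sum_eq_le {U R : Finset α} {f : α → β} (hRU : R ⊆ U)
    (hR : ∀ i ∈ U, f i ≠ 0 ↔ i ∈ R) (m : ℕ) (c : β) :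
    #{S ∈ U.powersetCard m | ∑ i ∈ S, f i = c}
      ≤ (#R).choose (#R / 2) * (#U - #R).choose ((#U - #R) / 2) := by
  set 𝒮 := {S ∈ U.powersetCard m | ∑ i ∈ S, f i = c}
  have hmaps : ∀ S ∈ 𝒮, S ∩ R ∈ {A ∈ R.powerset | ∑ i ∈ A, f i = c} := by
    intro S hS
    obtain ⟨hSU, hSc⟩ := mem_filter.1 hS
    refine mem_filter.2 ⟨mem_powerset.2 inter_subset_right, hSc ▸ ?_⟩
    refine sum_subset inter_subset_left fun i hiS hiR => ?_
    by_contra hfi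
    exact hiR (mem_inter.2 ⟨hiS, (hR i ((mem_powersetCard.1 hSU).1 hiS)).1 hfi⟩)
  have hfiber : ∀ A ∈ {A ∈ R.powerset | ∑ i ∈ A, f i = c},
      #{S ∈ 𝒮 | S ∩ R = A} ≤ (#U - #R).choose ((#U - #R) / 2) := fun A _ =>
    calc #{S ∈ 𝒮 | S ∩ R = A}
        ≤ #{S ∈ U.powersetCard m | S ∩ R = A} :=
          card_le_card (filter_subset_filter _ (filter_subset _ _))
      _ ≤ (#(U \ R)).choose (m - #A) := card_powersetCard_filter_inter_eq_le U R A m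
      _ ≤ (#U - #R).choose ((#U - #R) / 2) := by
        rw [card_sdiff_of_subset hRU]; exact Nat.choose_le_middle _ _
  calc #𝒮
      ≤ (#U - #R).choose ((#U - #R) / 2) * #{A ∈ R.powerset | ∑ i ∈ A, f i = c} :=
        card_le_mul_card_image_of_maps_to hmaps _ hfiber
    _ ≤ (#U - #R).choose ((#U - #R) / 2) * (#R).choose (#R / 2) :=
        Nat.mul_le_mul_left _ (card_powerset_filter_sum_eq_le (fun i hi => (hR i (hRU hi)).2 hi) c)
    _ = (#R).choose (#R / 2) * (#U - #R).choose ((#U - #R) / 2) := mul_comm _ _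

end OrderedGroup

noncomputable def halfVertex (ℓ : α) (S : Finset α) : α → ℝ :=
  fun i => if i = ℓ then 1 / 2 else if i ∈ S then 1 else 0

section Fintype

variable [Fintype α]

theorem eq_halfVertex {x : α → ℝ} {ℓ : α} (hℓ : x ℓ = 1 / 2)
    (h01 : ∀ i, i ≠ ℓ → x i = 0 ∨ x i = 1) : x = halfVertex ℓ {i | x i = 1} := by
  funext i
  by_cases hi : i = ℓ
  · simp [halfVertex, hi, hℓ]
  · rcases h01 i hi with h | h <;> simp [halfVertex, hi, h]

theorem sum_mul_halfVertex (w : α → ℝ) {ℓ : α} {S : Finset α} (hℓS : ℓ ∉ S) :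
    ∑ i, w i * halfVertex ℓ S i = w ℓ / 2 + ∑ i ∈ S, w i := by
  have h : ∀ i, halfVertex ℓ S i = (if i = ℓ then 1 / 2 else 0) + if i ∈ S then 1 else 0 := by
    intro i
    by_cases hi : i = ℓ
    · simp [halfVertex, hi, hℓS]
    · simp [halfVertex, hi]
  simp only [h, mul_add, sum_add_distrib, mul_ite, mul_zero, mul_one, sum_ite_eq', mem_univ,
    if_true, sum_ite_mem, univ_inter]
  ring

end Fintype

theorem per_coordinate_counting_bound_general (n : ℕ) (hn : Odd n) (a : Fin n → ℤ)
    (t : ℕ) (hT : (Finset.univ.filter (fun i => a i ≠ 0)).card = t)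
    (ht1 : 1 ≤ t) (ℓ : Fin n) (hℓ : a ℓ ≠ 0) (b : ℤ) :
    Set.ncard {x : Fin n → ℝ |
        x ℓ = 1 / 2 ∧ (∀ i, i ≠ ℓ → (x i = 0 ∨ x i = 1)) ∧
        Set.ncard {i : Fin n | x i = 1} = (n - 1) / 2 ∧
        ∑ i, (a i : ℝ) * x i = (b : ℝ) + 1 / 2}
      ≤ (t - 1).choose (t / 2) * (n - t).choose ((n - 1) / 2 - t / 2) := by
  classical
  set 𝒮 := {S ∈ (univ.erase ℓ).powersetCard ((n - 1) / 2) |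
    ∑ i ∈ S, (a i : ℝ) = b + 1 / 2 - a ℓ / 2}
  refine (Set.ncard_le_ncard (t := 𝒮.image (halfVertex ℓ)) ?_ (finite_toSet _)).trans ?_
  · rintro x ⟨hxℓ, h01, hcard, hsum⟩
    have hℓS : ℓ ∉ ({i | x i = 1} : Finset (Fin n)) := by norm_num [hxℓ]
    have hx := eq_halfVertex hxℓ h01
    rw [hx, sum_mul_halfVertex _ hℓS] at hsum
    refine mem_image.2 ⟨_, mem_filter.2 ⟨mem_powersetCard.2 ⟨subset_erase.2 ⟨subset_univ _, hℓS⟩,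
      ?_⟩, by linarith⟩, hx.symm⟩
    rw [← hcard, ← Set.ncard_coe_finset, coe_filter_univ]
  have hR : #((univ.filter (a · ≠ 0)).erase ℓ) = t - 1 := by
    rw [card_erase_of_mem (by simpa using hℓ), hT]
  obtain ⟨k, rfl⟩ := hn
  calc _ = #(𝒮.image (halfVertex ℓ)) := Set.ncard_coe_finset _
    _ ≤ #𝒮 := card_image_le
    _ ≤ _ := card_powersetCard_filter_sum_eq_le (R := (univ.filter (a · ≠ 0)).erase ℓ)
        (erase_subset_erase _ (subset_univ _)) (by simp +contextual) _ _
    _ = _ := by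
      rw [hR, card_erase_of_mem (mem_univ ℓ), card_univ, Fintype.card_fin,
        Nat.choose_div_two_eq_choose_succ_div_two, Nat.sub_add_cancel ht1,
        show 2 * k + 1 - 1 - (t - 1) = 2 * k + 1 - t by omega,
        show (2 * k + 1 - t) / 2 = (2 * k + 1 - 1) / 2 - t / 2 by omega]

/-- Per-coordinate counting bound in the proof of Theorem 1.2: for `n` odd,
`a ∈ ℤ^n` with support `T` of size `t` (`1 ≤ t ≤ ⌊n/2⌋`), `ℓ ∈ T` and `b ∈ ℤ`,
the number of points `x ∈ ℝ^n` with `x ℓ = 1/2`, all other coordinates in `{0,1}`,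
exactly `(n-1)/2` coordinates equal to `1`, and `⟨a,x⟩ = b + 1/2`, is at most
`C(t-1, ⌊t/2⌋) * C(n-t, (n-1)/2 - ⌊t/2⌋)`. -/
theorem per_coordinate_counting_bound (n : ℕ) (hn : Odd n) (a : Fin n → ℤ)
    (t : ℕ) (hT : (Finset.univ.filter (fun i => a i ≠ 0)).card = t)
    (ht1 : 1 ≤ t) (ht2 : t ≤ n / 2) (ℓ : Fin n) (hℓ : a ℓ ≠ 0) (b : ℤ) :
    Set.ncard {x : Fin n → ℝ |
        x ℓ = 1 / 2 ∧ (∀ i, i ≠ ℓ → (x i = 0 ∨ x i = 1)) ∧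
        Set.ncard {i : Fin n | x i = 1} = (n - 1) / 2 ∧
        ∑ i, (a i : ℝ) * x i = (b : ℝ) + 1 / 2}
      ≤ (t - 1).choose (t / 2) * (n - t).choose ((n - 1) / 2 - t / 2) :=
  per_coordinate_counting_bound_general n hn a t hT ht1 ℓ hℓ b
end

section
/- Let n be an odd natural number, let a ∈ ℤ^n have support of size t with 1 ≤ t ≤ ⌊n/2⌋, and let b ∈ ℤ. Then the number of vectors x ∈ ℝ^n such that exactly one coordinate of x equals 1/2, all other coordinates are in {0,1}, ∑_{i=1}^n x_i = n/2, and b < ⟨a, x⟩ < b + 1, is at most p(n,t) := t · C(t−1, ⌊t/2⌋) · C(n−t, (n−1)/2 − ⌊t/2⌋). -/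
/-!
A vertex counted here is `x = e_ℓ / 2 + 1_A` with `ℓ ∉ A` and `#A = (n - 1) / 2`, and
`b < ⟨a, x⟩ < b + 1` forces `a ℓ + 2 ∑_{i ∈ A} a i = 2b + 1`; in particular `a ℓ` is odd, so `ℓ`
lies in the support `S` of `a`: `t` choices. For fixed `ℓ`, the set `A ∩ S ⊆ S \ {ℓ}` has a
prescribed `a`-sum, so by the Erdős–Littlewood–Offord bound it takes at most
`C(t - 1, ⌊(t - 1) / 2⌋)` values: flipping membership at the negative weights turns these sets into
a family with constant sum of the positive weights `|a i|`, hence a Sperner antichain. The rest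
`A \ S` is a subset of prescribed size of the `n - t` coordinates outside `S`, so it takes at most
`C(n - t, ⌊(n - t) / 2⌋)` values.
-/

open Finset
open scoped symmDiff

section LittlewoodOfford

variable {ι G : Type*} [DecidableEq ι] [AddCommGroup G] [LinearOrder G] [IsOrderedAddMonoid G]

lemma sum_abs_symmDiff_filter_neg_s7 [Fintype ι] (f : ι → G) (B : Finset ι) :
    ∑ i ∈ B ∆ univ.filter (f · < 0), |f i| = ∑ i ∈ B, f i + ∑ i with f i < 0, |f i| := by
  have sum_eq_univ (s : Finset ι) (g : ι → G) : ∑ i ∈ s, g i = ∑ i, if i ∈ s then g i else 0 := by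
    rw [sum_ite_mem, univ_inter]
  rw [sum_eq_univ (B ∆ _), sum_eq_univ B, sum_eq_univ (filter _ _), ← sum_add_distrib]
  refine sum_congr rfl fun i _ => ?_
  by_cases hB : i ∈ B <;> by_cases hN : f i < 0 <;>
    simp [mem_symmDiff, hB, hN, abs_of_neg, abs_of_nonneg (not_lt.1 hN)]

theorem card_filter_sum_eq_le_choose_half [Fintype ι] {f : ι → G} (hf : ∀ i, f i ≠ 0) (c : G) :
    #{B : Finset ι | ∑ i ∈ B, f i = c} ≤ (Fintype.card ι).choose (Fintype.card ι / 2) := by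
  rw [← card_image_of_injective _ (symmDiff_left_injective (univ.filter (f · < 0)))]
  refine IsAntichain.sperner fun X hX Y hY hne hXY => ?_
  simp only [coe_image, coe_filter, mem_univ, true_and, Set.mem_image] at hX hY
  obtain ⟨B, hB, rfl⟩ := hX
  obtain ⟨C, hC, rfl⟩ := hY
  obtain ⟨i, hiC, hiB⟩ := exists_of_ssubset (hXY.ssubset_of_ne hne)
  have hlt := sum_lt_sum_of_subset hXY hiC hiB (abs_pos.2 (hf i)) fun j _ _ => abs_nonneg (f j)
  rw [sum_abs_symmDiff_filter_neg_s7, sum_abs_symmDiff_filter_neg_s7, hB, hC] at hlt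
  exact lt_irrefl _ hlt

theorem card_filter_powerset_sum_eq_le_choose_half (s : Finset ι) {f : ι → G}
    (hf : ∀ i ∈ s, f i ≠ 0) (c : G) :
    #{B ∈ s.powerset | ∑ i ∈ B, f i = c} ≤ (#s).choose (#s / 2) := by
  rw [← Fintype.card_coe s]
  refine (card_le_card_of_injOn (fun B => B.subtype (· ∈ s))
    (t := ({B | ∑ i ∈ B, f i = c} : Finset (Finset s))) (fun B hB => ?_)
    fun B hB C hC hBC => ?_).trans
    (card_filter_sum_eq_le_choose_half (f := fun i : s => f i) (fun i => hf i i.2) c)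
  · simp only [coe_filter, mem_powerset] at hB
    simpa [sum_subtype_of_mem f hB.1] using hB.2
  · simp only [coe_filter, mem_powerset] at hB hC
    rw [← subtype_map_of_mem hB.1, ← subtype_map_of_mem hC.1]
    exact congrArg _ hBC

end LittlewoodOfford

theorem card_le_choose_half_mul_card_image_inter {α : Type*} [Fintype α] [DecidableEq α]
    {𝒜 : Finset (Finset α)} {m : ℕ} (h𝒜 : ∀ A ∈ 𝒜, #A = m) (S : Finset α) :
    #𝒜 ≤ (#Sᶜ).choose (#Sᶜ / 2) * #(𝒜.image (· ∩ S)) := by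
  refine card_le_mul_card_image 𝒜 _ fun B _ => ?_
  calc #{A ∈ 𝒜 | A ∩ S = B}
      ≤ #(Sᶜ.powersetCard (m - #B)) := by
        refine card_le_card_of_injOn (· \ S) (fun A hA => ?_) fun A hA A' hA' hAA' => ?_
        · simp only [coe_filter] at hA
          rw [mem_coe, mem_powersetCard, ← h𝒜 A hA.1, ← hA.2, ← card_sdiff_add_card_inter A S]
          exact ⟨fun i hi => mem_compl.2 (mem_sdiff.1 hi).2, (Nat.add_sub_cancel _ _).symm⟩
        · simp only [coe_filter] at hA hA'
          rw [← sdiff_union_inter A S, ← sdiff_union_inter A' S, hA.2, hA'.2]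
          exact congrArg (· ∪ B) hAA'
    _ ≤ (#Sᶜ).choose (#Sᶜ / 2) := by
        rw [card_powersetCard]
        exact Nat.choose_le_middle _ _

theorem Nat.choose_pred_div_two (n : ℕ) :
    (n - 1).choose ((n - 1) / 2) = (n - 1).choose (n / 2) := by
  rcases n.even_or_odd with ⟨j, rfl⟩ | ⟨j, rfl⟩
  · rcases j.eq_zero_or_pos with rfl | hj
    · rfl
    · exact Nat.choose_symm_of_eq_add (by omega)
  · congr 1
    omega

section JeroslowVertex

variable {ι : Type*} [Fintype ι] [DecidableEq ι]

noncomputable def halfIntegralVertex (ℓ : ι) (A : Finset ι) : ι → ℝ :=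
  fun i => if i = ℓ then 1 / 2 else if i ∈ A then 1 else 0

lemma exists_eq_halfIntegralVertex {x : ι → ℝ} {ℓ : ι} (hℓ : x ℓ = 1 / 2)
    (h01 : ∀ i, i ≠ ℓ → x i = 0 ∨ x i = 1) : ∃ A, ℓ ∉ A ∧ x = halfIntegralVertex ℓ A := by
  refine ⟨univ.filter (x · = 1), by simp [hℓ], funext fun i => ?_⟩
  by_cases hi : i = ℓ
  · simp [halfIntegralVertex, hi, hℓ]
  · rcases h01 i hi with h | h <;> simp [halfIntegralVertex, hi, h]

lemma sum_mul_halfIntegralVertex (w : ι → ℝ) {ℓ : ι} {A : Finset ι} (hℓ : ℓ ∉ A) :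
    ∑ i, w i * halfIntegralVertex ℓ A i = w ℓ / 2 + ∑ i ∈ A, w i := by
  have hpoint : ∀ i, w i * halfIntegralVertex ℓ A i
      = (if i = ℓ then w ℓ / 2 else 0) + if i ∈ A then w i else 0 := by
    intro i
    by_cases hi : i = ℓ
    · subst hi; simp [halfIntegralVertex, hℓ, div_eq_mul_inv]
    · by_cases hA : i ∈ A <;> simp [halfIntegralVertex, hi, hA]
  simp only [hpoint, sum_add_distrib, sum_ite_eq', mem_univ, if_true, sum_ite_mem, univ_inter]

/-- `A` encodes the vertex `halfIntegralVertex ℓ A`; the last condition says `⟨a, x⟩ = b + 1/2`,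
the only half-integer strictly between `b` and `b + 1`. -/
def splitInteriorVertexSets (a : ι → ℤ) (b : ℤ) (m : ℕ) (ℓ : ι) : Finset (Finset ι) :=
  {A | ℓ ∉ A ∧ #A = m ∧ a ℓ + 2 * ∑ i ∈ A, a i = 2 * b + 1}

theorem mem_biUnion_splitInteriorVertexSets {a : ι → ℤ} {b : ℤ} {m : ℕ} {x : ι → ℝ}
    (hx : ∃ ℓ, x ℓ = 1 / 2 ∧ ∀ i, i ≠ ℓ → x i = 0 ∨ x i = 1)
    (hsum : ∑ i, x i = ((2 * m + 1 : ℕ) : ℝ) / 2)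
    (hlo : (b : ℝ) < ∑ i, (a i : ℝ) * x i) (hhi : ∑ i, (a i : ℝ) * x i < b + 1) :
    x ∈ ({ℓ | a ℓ ≠ 0} : Finset ι).biUnion
      fun ℓ => (splitInteriorVertexSets a b m ℓ).image (halfIntegralVertex ℓ) := by
  obtain ⟨ℓ, hℓ, h01⟩ := hx
  obtain ⟨A, hℓA, rfl⟩ := exists_eq_halfIntegralVertex hℓ h01
  have hcard : #A = m := by
    have h := sum_mul_halfIntegralVertex (fun _ => 1) hℓA
    simp only [one_mul, sum_const, nsmul_eq_mul, mul_one] at h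
    rw [h] at hsum
    push_cast at hsum
    exact_mod_cast (by linarith : (#A : ℝ) = m)
  have hval : a ℓ + 2 * ∑ i ∈ A, a i = 2 * b + 1 := by
    rw [sum_mul_halfIntegralVertex _ hℓA] at hlo hhi
    have hlo' : 2 * b < a ℓ + 2 * ∑ i ∈ A, a i := by
      exact_mod_cast (by push_cast; linarith : (2 * b : ℝ) < ((a ℓ + 2 * ∑ i ∈ A, a i : ℤ) : ℝ))
    have hhi' : a ℓ + 2 * ∑ i ∈ A, a i < 2 * b + 2 := by
      exact_mod_cast (by push_cast; linarith : ((a ℓ + 2 * ∑ i ∈ A, a i : ℤ) : ℝ) < 2 * b + 2)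
    omega
  simp only [mem_biUnion, mem_image, mem_filter, mem_univ, true_and, splitInteriorVertexSets]
  exact ⟨ℓ, by omega, A, ⟨hℓA, hcard, hval⟩, rfl⟩

theorem card_splitInteriorVertexSets_le {a : ι → ℤ} {S : Finset ι} (hS : ∀ i, i ∈ S ↔ a i ≠ 0)
    (b : ℤ) (m : ℕ) {ℓ : ι} (hℓ : ℓ ∈ S) :
    #(splitInteriorVertexSets a b m ℓ) ≤
      (#S - 1).choose ((#S - 1) / 2) * (#Sᶜ).choose (#Sᶜ / 2) := by
  have himage : (splitInteriorVertexSets a b m ℓ).image (· ∩ S) ⊆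
      {B ∈ (S.erase ℓ).powerset | ∑ i ∈ B, 2 * a i = 2 * b + 1 - a ℓ} := by
    intro B hB
    simp only [mem_image, splitInteriorVertexSets, mem_filter, mem_univ, true_and] at hB
    obtain ⟨A, ⟨hℓA, -, hval⟩, rfl⟩ := hB
    have hsupp : ∑ i ∈ A ∩ S, a i = ∑ i ∈ A, a i :=
      sum_subset inter_subset_left fun i hiA hi => by
        by_contra h
        exact hi (mem_inter.2 ⟨hiA, (hS i).2 h⟩)
    refine mem_filter.2 ⟨mem_powerset.2 fun i hi => ?_, ?_⟩
    · exact mem_erase.2 ⟨fun h => hℓA (h ▸ (mem_inter.1 hi).1), (mem_inter.1 hi).2⟩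
    · rw [← mul_sum, hsupp]
      omega
  have hlo := card_filter_powerset_sum_eq_le_choose_half (S.erase ℓ)
    (f := fun i => 2 * a i) (fun i hi => mul_ne_zero two_ne_zero ((hS i).1 (mem_of_mem_erase hi)))
    (2 * b + 1 - a ℓ)
  rw [card_erase_of_mem hℓ] at hlo
  calc #(splitInteriorVertexSets a b m ℓ)
      ≤ (#Sᶜ).choose (#Sᶜ / 2) * #((splitInteriorVertexSets a b m ℓ).image (· ∩ S)) :=
        card_le_choose_half_mul_card_image_inter (fun A hA => (mem_filter.1 hA).2.2.1) S
    _ ≤ (#Sᶜ).choose (#Sᶜ / 2) * (#S - 1).choose ((#S - 1) / 2) :=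
        Nat.mul_le_mul_left _ ((card_le_card himage).trans hlo)
    _ = _ := mul_comm _ _

end JeroslowVertex

theorem split_set_vertices_bound_general (n : ℕ) (hn : Odd n) (a : Fin n → ℤ)
    (t : ℕ) (hT : (Finset.univ.filter (fun i => a i ≠ 0)).card = t)
    (ht2 : t ≤ n / 2) (b : ℤ) :
    Set.ncard {x : Fin n → ℝ |
        (∃ ℓ : Fin n, x ℓ = 1 / 2 ∧ ∀ i, i ≠ ℓ → (x i = 0 ∨ x i = 1)) ∧
        ∑ i, x i = (n : ℝ) / 2 ∧
        (b : ℝ) < ∑ i, (a i : ℝ) * x i ∧ ∑ i, (a i : ℝ) * x i < (b : ℝ) + 1}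
      ≤ t * ((t - 1).choose (t / 2) * (n - t).choose ((n - 1) / 2 - t / 2)) := by
  obtain ⟨m, rfl⟩ := hn
  set S : Finset (Fin (2 * m + 1)) := {i | a i ≠ 0}
  have hSc : #Sᶜ = 2 * m + 1 - t := by rw [card_compl, Fintype.card_fin, hT]
  calc Set.ncard _
      ≤ #(S.biUnion fun ℓ => (splitInteriorVertexSets a b m ℓ).image (halfIntegralVertex ℓ)) := by
        rw [← Set.ncard_coe_finset]
        exact Set.ncard_le_ncard (fun x ⟨hx, hsum, hlo, hhi⟩ =>
          mem_biUnion_splitInteriorVertexSets hx hsum hlo hhi) (finite_toSet _)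
    _ ≤ ∑ ℓ ∈ S, #(splitInteriorVertexSets a b m ℓ) :=
        card_biUnion_le.trans (sum_le_sum fun _ _ => card_image_le)
    _ ≤ ∑ ℓ ∈ S, (t - 1).choose (t / 2) * (2 * m + 1 - t).choose ((2 * m + 1 - 1) / 2 - t / 2) :=
        sum_le_sum fun ℓ hℓ => by
          have h := card_splitInteriorVertexSets_le (a := a) (fun i => by simp [S]) b m hℓ
          have hmid : (2 * m + 1 - t) / 2 = (2 * m + 1 - 1) / 2 - t / 2 := by omega
          rwa [hT, hSc, Nat.choose_pred_div_two, hmid] at h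
    _ = _ := by rw [sum_const, hT, smul_eq_mul]

/-- The bound `|V(D)| ≤ p(t)` in the proof of Theorem 1.2: for `n` odd, a split
disjunction `⟨a,x⟩ ≤ b ∨ ⟨a,x⟩ ≥ b+1` with `a ∈ ℤ^n` of support size `t`
(`1 ≤ t ≤ ⌊n/2⌋`), the number of optimal LP vertices of the Jeroslow polytope
(points with exactly one coordinate equal to `1/2`, all others in `{0,1}`, and
coordinate sum `n/2`) lying strictly inside the split set is at most
`p(n,t) = t * C(t-1, ⌊t/2⌋) * C(n-t, (n-1)/2 - ⌊t/2⌋)`. -/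
theorem split_set_vertices_bound (n : ℕ) (hn : Odd n) (a : Fin n → ℤ)
    (t : ℕ) (hT : (Finset.univ.filter (fun i => a i ≠ 0)).card = t)
    (ht1 : 1 ≤ t) (ht2 : t ≤ n / 2) (b : ℤ) :
    Set.ncard {x : Fin n → ℝ |
        (∃ ℓ : Fin n, x ℓ = 1 / 2 ∧ ∀ i, i ≠ ℓ → (x i = 0 ∨ x i = 1)) ∧
        ∑ i, x i = (n : ℝ) / 2 ∧
        (b : ℝ) < ∑ i, (a i : ℝ) * x i ∧ ∑ i, (a i : ℝ) * x i < (b : ℝ) + 1}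
      ≤ t * ((t - 1).choose (t / 2) * (n - t).choose ((n - 1) / 2 - t / 2)) :=
  split_set_vertices_bound_general n hn a t hT ht2 b
end

section
/- Let n be an odd natural number, define p(n,t) := t · C(t−1, ⌊t/2⌋) · C(n−t, (n−1)/2 − ⌊t/2⌋) for natural numbers t, and let t satisfy 1 ≤ t < ⌊n/2⌋. If t is even, then p(n, t+1) · t · (n−t) = p(n, t) · (t+1) · (n−t+1); if t is odd, then p(n, t+1) = p(n, t). -/
/-- `p(n,t) = t * C(t-1, ⌊t/2⌋) * C(n-t, (n-1)/2 - ⌊t/2⌋)` from the proof of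
Theorem 1.2. -/
def p (n t : ℕ) : ℕ :=
  t * ((t - 1).choose (t / 2) * (n - t).choose ((n - 1) / 2 - t / 2))

lemma central_double (j : ℕ) : (2*j+2).choose (j+1) = 2 * (2*j+1).choose j := by
  have h1 : (2*j+1).choose (j+1) = (2*j+1).choose j := by
    have := Nat.choose_symm (n := 2*j+1) (k := j+1) (by omega)
    simpa [show 2*j+1-(j+1) = j by omega] using this.symm
  rw [show 2*j+2 = (2*j+1)+1 by omega, Nat.choose_succ_succ, h1]
  omega

lemma succ_half (j : ℕ) : (2*j+1) * (2*j).choose j = (2*j+1).choose j * (j+1) := by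
  have h1 : (2*j+1).choose (j+1) = (2*j+1).choose j := by
    have := Nat.choose_symm (n := 2*j+1) (k := j+1) (by omega)
    simpa [show 2*j+1-(j+1) = j by omega] using this.symm
  have h2 := Nat.add_one_mul_choose_eq (2*j) j
  -- (2j+1) * C(2j,j) = C(2j+1,j+1) * (j+1)
  rw [← h1]
  simpa [Nat.succ_eq_add_one] using h2

/-- Ratio computation from the proof of Theorem 1.2, in cleared-denominator form:
for `n` odd and `1 ≤ t < ⌊n/2⌋`, if `t` is even then
`p(n,t+1) * t * (n-t) = p(n,t) * (t+1) * (n-t+1)`, and if `t` is odd then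
`p(n,t+1) = p(n,t)`. -/
theorem p_ratio (n t : ℕ) (hn : Odd n) (ht1 : 1 ≤ t) (ht2 : t < n / 2) :
    (Even t → p n (t + 1) * t * (n - t) = p n t * (t + 1) * (n - t + 1)) ∧
    (Odd t → p n (t + 1) = p n t) := by
  obtain ⟨m, hm⟩ := hn
  have htm : t < m := by omega
  constructor
  · intro hE
    obtain ⟨c, hc⟩ := hE
    obtain ⟨k, hk⟩ : ∃ k, t = 2*k+2 := ⟨c - 1, by omega⟩
    obtain ⟨j, hj⟩ : ∃ j, m = k + j + 1 := ⟨m - k - 1, by omega⟩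
    have hp1 : p n (t+1) = (2*k+3) * ((2*k+2).choose (k+1) * (2*j).choose j) := by
      simp only [p]
      rw [show t+1 = 2*k+3 by omega, show 2*k+3-1 = 2*k+2 by omega,
        show (2*k+3)/2 = k+1 by omega, show n-(2*k+3) = 2*j by omega,
        show (n-1)/2 = k+j+1 by omega, show k+j+1-(k+1) = j by omega]
    have hp0 : p n t = (2*k+2) * ((2*k+1).choose (k+1) * (2*j+1).choose j) := by
      simp only [p]
      rw [show t = 2*k+2 by omega, show 2*k+2-1 = 2*k+1 by omega,
        show (2*k+2)/2 = k+1 by omega, show n-(2*k+2) = 2*j+1 by omega,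
        show (n-1)/2 = k+j+1 by omega, show k+j+1-(k+1) = j by omega]
    have hsym : (2*k+1).choose (k+1) = (2*k+1).choose k := by
      have := Nat.choose_symm (n := 2*k+1) (k := k+1) (by omega)
      simpa [show 2*k+1-(k+1) = k by omega] using this.symm
    have hcd : (2*k+2).choose (k+1) = 2 * (2*k+1).choose k := central_double k
    have hB := succ_half j
    rw [hp1, hp0, hsym, hcd, show n - t = 2*j+1 by omega, show t = 2*k+2 by omega]
    zify at hB ⊢
    linear_combination ((2*(k:ℤ)+3)*(2*k+2)*2*((2*k+1).choose k : ℤ)) * hB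
  · intro hO
    obtain ⟨k, hk⟩ := hO
    obtain ⟨j, hj⟩ : ∃ j, m = k + j + 1 := ⟨m - k - 1, by omega⟩
    have hp1 : p n (t+1) = (2*k+2) * ((2*k+1).choose (k+1) * (2*j+1).choose j) := by
      simp only [p]
      rw [show t+1 = 2*k+2 by omega, show 2*k+2-1 = 2*k+1 by omega,
        show (2*k+2)/2 = k+1 by omega, show n-(2*k+2) = 2*j+1 by omega,
        show (n-1)/2 = k+j+1 by omega, show k+j+1-(k+1) = j by omega]
    have hp0 : p n t = (2*k+1) * ((2*k).choose k * (2*j+2).choose (j+1)) := by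
      simp only [p]
      rw [show t = 2*k+1 by omega, show 2*k+1-1 = 2*k by omega,
        show (2*k+1)/2 = k by omega, show n-(2*k+1) = 2*j+2 by omega,
        show (n-1)/2 = k+j+1 by omega, show k+j+1-k = j+1 by omega]
    have hS := succ_half k
    have hsym : (2*k+1).choose (k+1) = (2*k+1).choose k := by
      have := Nat.choose_symm (n := 2*k+1) (k := k+1) (by omega)
      simpa [show 2*k+1-(k+1) = k by omega] using this.symm
    rw [hp1, hp0, hsym, central_double j]
    zify at hS ⊢
    linear_combination (-2*((2*j+1).choose j : ℤ)) * hS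
end

section
/- Let n be an odd natural number, define p(n,t) := t · C(t−1, ⌊t/2⌋) · C(n−t, (n−1)/2 − ⌊t/2⌋), and let s, t be natural numbers with 1 ≤ t ≤ s ≤ ⌊n/2⌋. Then p(n,t) ≤ p(n,s). -/
lemma central_succ (k : ℕ) : (2*k+2).choose (k+1) = 2 * ((2*k+1).choose k) := by
  rw [show 2*k+2 = (2*k+1)+1 from rfl, Nat.choose_succ_succ, Nat.choose_symm_half]
  omega

lemma mid_le (k : ℕ) : (2*k+1).choose k ≤ 2 * ((2*k).choose k) := by
  cases k with
  | zero => simp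
  | succ j =>
    have h : (2*(j+1)+1).choose (j+1) = (2*j+2).choose j + (2*j+2).choose (j+1) := by
      rw [show 2*(j+1)+1 = (2*j+2)+1 from by ring, Nat.choose_succ_succ]
    have h2 : (2*j+2).choose j ≤ (2*j+2).choose (j+1) := by
      have := Nat.choose_le_middle j (2*j+2)
      simpa [show (2*j+2)/2 = j+1 by omega] using this
    rw [h, show 2*(j+1) = 2*j+2 from by ring]
    omega

lemma p_step (m t : ℕ) (ht : 1 ≤ t) (h : t + 1 ≤ m) :
    p (2*m+1) t ≤ p (2*m+1) (t+1) := by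
  rcases Nat.even_or_odd t with ⟨b', hb⟩ | ⟨b, hb⟩
  · -- t even, t = 2b+2
    obtain ⟨b, rfl⟩ : ∃ b, b' = b + 1 := ⟨b' - 1, by omega⟩
    obtain ⟨k, hk, hk2⟩ : ∃ k, m = k + b + 1 ∧ b + 2 ≤ k := ⟨m - b - 1, by omega⟩
    subst hb hk
    have e1 : p (2*(k+b+1)+1) (b+1+(b+1)) =
        (2*b+2) * ((2*b+1).choose (b+1) * (2*k+1).choose k) := by
      simp only [p]
      rw [show (2*(k+b+1)+1-1)/2 - (b+1+(b+1))/2 = k from by omega,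
        show b+1+(b+1)-1 = 2*b+1 from by omega,
        show (b+1+(b+1))/2 = b+1 from by omega,
        show 2*(k+b+1)+1-(b+1+(b+1)) = 2*k+1 from by omega,
        show b+1+(b+1) = 2*b+2 from by omega]
    have e2 : p (2*(k+b+1)+1) (b+1+(b+1)+1) =
        (2*b+3) * ((2*b+2).choose (b+1) * (2*k).choose k) := by
      simp only [p]
      rw [show (2*(k+b+1)+1-1)/2 - (b+1+(b+1)+1)/2 = k from by omega,
        show b+1+(b+1)+1-1 = 2*b+2 from by omega,
        show (b+1+(b+1)+1)/2 = b+1 from by omega,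
        show 2*(k+b+1)+1-(b+1+(b+1)+1) = 2*k from by omega,
        show b+1+(b+1)+1 = 2*b+3 from by omega]
    rw [e1, e2, central_succ b, Nat.choose_symm_half]
    calc (2*b+2) * ((2*b+1).choose b * (2*k+1).choose k)
        ≤ (2*b+2) * ((2*b+1).choose b * (2 * ((2*k).choose k))) :=
          Nat.mul_le_mul_left _ (Nat.mul_le_mul_left _ (mid_le k))
      _ ≤ (2*b+3) * (2 * ((2*b+1).choose b) * (2*k).choose k) := by
          nlinarith [((2*b+1).choose b * (2*k).choose k).zero_le]
  · -- t odd, t = 2b+1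
    obtain ⟨k, hk, hk1⟩ : ∃ k, m = k + b + 1 ∧ b + 1 ≤ k := ⟨m - b - 1, by omega⟩
    subst hb hk
    have e1 : p (2*(k+b+1)+1) (2*b+1) =
        (2*b+1) * ((2*b).choose b * (2*k+2).choose (k+1)) := by
      simp only [p]
      rw [show (2*(k+b+1)+1-1)/2 - (2*b+1)/2 = k+1 from by omega,
        show 2*b+1-1 = 2*b from by omega,
        show (2*b+1)/2 = b from by omega,
        show 2*(k+b+1)+1-(2*b+1) = 2*k+2 from by omega]
    have e2 : p (2*(k+b+1)+1) (2*b+1+1) =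
        (2*b+2) * ((2*b+1).choose (b+1) * (2*k+1).choose k) := by
      simp only [p]
      rw [show (2*(k+b+1)+1-1)/2 - (2*b+1+1)/2 = k from by omega,
        show 2*b+1+1-1 = 2*b+1 from by omega,
        show (2*b+1+1)/2 = b+1 from by omega,
        show 2*(k+b+1)+1-(2*b+1+1) = 2*k+1 from by omega,
        show 2*b+1+1 = 2*b+2 from by omega]
    rw [e1, e2, central_succ k]
    apply le_of_eq
    have hc : (2*b+1) * ((2*b).choose b) = (2*b+1).choose (b+1) * (b+1) := by
      simpa using Nat.add_one_mul_choose_eq (2*b) b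
    calc (2*b+1) * ((2*b).choose b * (2 * ((2*k+1).choose k)))
        = ((2*b+1) * ((2*b).choose b)) * (2 * ((2*k+1).choose k)) := by ring
      _ = ((2*b+1).choose (b+1) * (b+1)) * (2 * ((2*k+1).choose k)) := by rw [hc]
      _ = (2*b+2) * ((2*b+1).choose (b+1) * (2*k+1).choose k) := by ring

/-- Monotonicity of `p(n,·)` on `{1, …, ⌊n/2⌋}` (proof of Theorem 1.2): for `n`
odd and `1 ≤ t ≤ s ≤ ⌊n/2⌋`, `p(n,t) ≤ p(n,s)`. -/
theorem p_monotone (n s t : ℕ) (hn : Odd n) (ht : 1 ≤ t) (hts : t ≤ s)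
    (hs : s ≤ n / 2) : p n t ≤ p n s := by
  obtain ⟨m, rfl⟩ := hn
  have hm : (2*m+1)/2 = m := by omega
  rw [hm] at hs
  induction s, hts using Nat.le_induction with
  | base => exact le_refl _
  | succ s hts ih =>
    exact le_trans (ih (by omega)) (p_step m s (le_trans ht hts) hs)
end

section
/- Let n be an odd natural number, let s be a natural number with 2 ≤ s ≤ ⌊n/2⌋, let h be the largest even number not exceeding s, and define p(n,t) := t · C(t−1, ⌊t/2⌋) · C(n−t, (n−1)/2 − ⌊t/2⌋). Then for every natural number t with 1 ≤ t ≤ s, p(n,t) ≤ C(n−1, (n−1)/2) · √( 2 n (h+1)² / (π h (n−h−1)) ). -/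
/-!
Write `n = 2m + 1`, so that the right-hand side is `c_m = C(2m, m)` times the square root. Up
to factors `2`, both binomial coefficients in `p(n, t)` are central binomial coefficients:
`p(n, t) / c_m` is `(2j + 1) c_j c_{m-j} / c_m` for `t = 2j + 1` and
`j c_j c_{m+1-j} / (2 c_m)` for `t = 2j`. Wallis' product gives
`π k c_k² ≤ 16^k ≤ π (2k + 1) c_k² / 2`, which bounds the squares of these ratios by rational
functions of `j` and `m`; that these are at most
`2n(h+1)²/(π h (n-h-1))` is a polynomial inequality, true because `2j ≤ h < 2m`.
-/

open Real Nat

theorem centralBinom_sq_mul_W (k : ℕ) :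
    (centralBinom k : ℝ) ^ 2 * (Wallis.W k * (2 * k + 1)) = 16 ^ k := by
  have hfac : (centralBinom k : ℝ) * (k ! * k !) = (2 * k)! := by
    have := choose_mul_factorial_mul_factorial (le_add_right k k)
    rw [add_tsub_cancel_right, ← two_mul] at this
    rw [centralBinom_eq_two_mul_choose, ← mul_assoc]
    exact_mod_cast this
  have hc : (centralBinom k : ℝ) ≠ 0 := by exact_mod_cast (centralBinom_pos k).ne'
  rw [Wallis.W_eq_factorial_ratio, ← hfac, pow_mul]
  field_simp
  norm_num

theorem two_mul_sixteen_pow_le_centralBinom_sq (k : ℕ) :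
    2 * 16 ^ k ≤ π * (2 * k + 1) * (centralBinom k : ℝ) ^ 2 := by
  rw [← centralBinom_sq_mul_W]
  have := Wallis.W_le k
  have : (0 : ℝ) ≤ (centralBinom k : ℝ) ^ 2 * (2 * k + 1) := by positivity
  nlinarith

theorem pi_mul_centralBinom_sq_le_sixteen_pow (k : ℕ) :
    π * k * (centralBinom k : ℝ) ^ 2 ≤ 16 ^ k := by
  rw [← centralBinom_sq_mul_W]
  have hW := Wallis.le_W k
  rw [div_mul_eq_mul_div, div_le_iff₀ (by positivity)] at hW
  have : π * k ≤ Wallis.W k * (2 * k + 1) := by nlinarith [pi_pos]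
  have : (0 : ℝ) ≤ (centralBinom k : ℝ) ^ 2 := by positivity
  nlinarith

theorem two_mul_choose_two_mul_add_one (a : ℕ) :
    2 * (2 * a + 1).choose a = centralBinom (a + 1) := by
  rw [centralBinom_eq_two_mul_choose, mul_add_one, choose_succ_succ, choose_symm_half]
  ring

theorem p_odd (j k : ℕ) :
    p (2 * (j + k) + 1) (2 * j + 1) = (2 * j + 1) * (centralBinom j * centralBinom k) := by
  rw [p, centralBinom_eq_two_mul_choose, centralBinom_eq_two_mul_choose,
    show 2 * (j + k) + 1 - (2 * j + 1) = 2 * k by omega,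
    show (2 * (j + k) + 1 - 1) / 2 - (2 * j + 1) / 2 = k by omega,
    show (2 * j + 1) / 2 = j by omega, add_tsub_cancel_right]

theorem p_even (j k : ℕ) :
    4 * p (2 * (j + k + 1) + 1) (2 * (j + 1)) =
      2 * (j + 1) * (centralBinom (j + 1) * centralBinom (k + 1)) := by
  rw [p, ← two_mul_choose_two_mul_add_one, ← two_mul_choose_two_mul_add_one,
    show 2 * (j + k + 1) + 1 - 2 * (j + 1) = 2 * k + 1 by omega,
    show (2 * (j + k + 1) + 1 - 1) / 2 - 2 * (j + 1) / 2 = k by omega,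
    show 2 * (j + 1) / 2 = j + 1 by omega, show 2 * (j + 1) - 1 = 2 * j + 1 by omega,
    choose_symm_half]
  ring

theorem pi_sq_mul_centralBinom_mul_sq_le_sixteen_pow (a b : ℕ) :
    π ^ 2 * a * b * ((centralBinom a : ℝ) * centralBinom b) ^ 2 ≤ 16 ^ (a + b) := by
  rw [pow_add]
  calc π ^ 2 * a * b * ((centralBinom a : ℝ) * centralBinom b) ^ 2
      = (π * a * (centralBinom a : ℝ) ^ 2) * (π * b * (centralBinom b : ℝ) ^ 2) := by ring
    _ ≤ 16 ^ a * 16 ^ b := by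
      gcongr
      · exact pi_mul_centralBinom_sq_le_sixteen_pow a
      · exact pi_mul_centralBinom_sq_le_sixteen_pow b

theorem pi_mul_sq_p_odd_le (j k : ℕ) :
    π * (2 * j * k) * (p (2 * (j + k) + 1) (2 * j + 1) : ℝ) ^ 2 ≤
      (2 * j + 1) ^ 2 * (2 * (j + k) + 1) * (centralBinom (j + k) : ℝ) ^ 2 := by
  have hupper := pi_sq_mul_centralBinom_mul_sq_le_sixteen_pow j k
  have hlower := two_mul_sixteen_pow_le_centralBinom_sq (j + k)
  refine le_of_mul_le_mul_left ?_ pi_pos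
  calc π * (π * (2 * j * k) * (p (2 * (j + k) + 1) (2 * j + 1) : ℝ) ^ 2)
      = 2 * (2 * (j : ℝ) + 1) ^ 2 *
          (π ^ 2 * j * k * ((centralBinom j : ℝ) * centralBinom k) ^ 2) := by
        rw [p_odd]; push_cast; ring
    _ ≤ (2 * (j : ℝ) + 1) ^ 2 * (2 * 16 ^ (j + k)) := by nlinarith
    _ ≤ π * ((2 * j + 1) ^ 2 * (2 * (j + k) + 1) * (centralBinom (j + k) : ℝ) ^ 2) := by
        push_cast at hlower; nlinarith

theorem pi_mul_sq_p_even_le (j k : ℕ) :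
    π * (2 * (k + 1)) * (p (2 * (j + k + 1) + 1) (2 * (j + 1)) : ℝ) ^ 2 ≤
      4 * (j + 1) * (2 * (j + k + 1) + 1) * (centralBinom (j + k + 1) : ℝ) ^ 2 := by
  have hupper := pi_sq_mul_centralBinom_mul_sq_le_sixteen_pow (j + 1) (k + 1)
  have hlower := two_mul_sixteen_pow_le_centralBinom_sq (j + k + 1)
  have hp : (p (2 * (j + k + 1) + 1) (2 * (j + 1)) : ℝ) =
      (j + 1) * (centralBinom (j + 1) * centralBinom (k + 1)) / 2 := by
    have := congrArg (Nat.cast (R := ℝ)) (p_even j k)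
    push_cast at this
    linarith
  rw [show j + 1 + (k + 1) = j + k + 1 + 1 by ring, pow_succ _ (j + k + 1)] at hupper
  refine le_of_mul_le_mul_left ?_ (by positivity : (0 : ℝ) < 8 * π * (j + 1))
  calc 8 * π * (j + 1) * (π * (2 * (k + 1)) * (p (2 * (j + k + 1) + 1) (2 * (j + 1)) : ℝ) ^ 2)
      = 4 * ((j : ℝ) + 1) ^ 2 * (π ^ 2 * (j + 1 : ℕ) * (k + 1 : ℕ) *
          ((centralBinom (j + 1) : ℝ) * centralBinom (k + 1)) ^ 2) := by
        rw [hp]; push_cast; ring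
    _ ≤ 4 * ((j : ℝ) + 1) ^ 2 * (16 ^ (j + k + 1) * 16) := by gcongr
    _ ≤ 8 * π * (j + 1) *
          (4 * (j + 1) * (2 * (j + k + 1) + 1) * (centralBinom (j + k + 1) : ℝ) ^ 2) := by
        push_cast at hlower; nlinarith

noncomputable def pBound (n h : ℕ) : ℝ :=
  ((n - 1).choose ((n - 1) / 2) : ℝ) *
    √(2 * n * (h + 1) ^ 2 / (π * h * ((n : ℝ) - h - 1)))

theorem le_pBound_of_pi_mul_sq_le {P A B : ℝ} {m h : ℕ} (hA : 0 < A) (hh : 0 < h)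
    (hhm : h < 2 * m) (hP : π * A * P ^ 2 ≤ B * (2 * m + 1) * (centralBinom m : ℝ) ^ 2)
    (hB : B * (h * (2 * m - h)) ≤ 2 * A * (h + 1) ^ 2) :
    P ≤ pBound (2 * m + 1) h := by
  have hD : (0 : ℝ) < h * (2 * m - h) :=
    mul_pos (by exact_mod_cast hh) (sub_pos.2 (by exact_mod_cast hhm))
  rw [pBound, add_tsub_cancel_right, mul_div_cancel_left₀ _ two_ne_zero,
    ← centralBinom_eq_two_mul_choose, ← sqrt_sq (by positivity : (0 : ℝ) ≤ centralBinom m),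
    ← sqrt_mul (sq_nonneg _)]
  apply le_sqrt_of_sq_le
  push_cast
  rw [mul_div_assoc', le_div_iff₀ (by linarith [mul_pos pi_pos hD])]
  refine le_of_mul_le_mul_left ?_ hA
  calc A * (P ^ 2 * (π * h * (2 * m + 1 - h - 1)))
      = (π * A * P ^ 2) * (h * (2 * m - h)) := by ring
    _ ≤ (B * (h * (2 * m - h))) * ((2 * m + 1) * (centralBinom m : ℝ) ^ 2) := by nlinarith
    _ ≤ (2 * A * (h + 1) ^ 2) * ((2 * m + 1) * (centralBinom m : ℝ) ^ 2) := by gcongr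
    _ = A * ((centralBinom m : ℝ) ^ 2 * (2 * (2 * m + 1) * (h + 1) ^ 2)) := by ring

theorem p_one_le_pBound {m h : ℕ} (hh : 0 < h) (hhm : h < 2 * m) :
    (p (2 * m + 1) 1 : ℝ) ≤ pBound (2 * m + 1) h := by
  have hp : p (2 * m + 1) 1 = centralBinom m := by simpa using p_odd 0 m
  have hh' : (0 : ℝ) ≤ h := by positivity
  have hgap : (0 : ℝ) ≤ 2 * m - h := sub_nonneg.2 (by exact_mod_cast hhm.le)
  refine le_pBound_of_pi_mul_sq_le (A := h * (2 * m - h)) (B := 2 * (h + 1) ^ 2)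
    (mul_pos (by exact_mod_cast hh) (sub_pos.2 (by exact_mod_cast hhm))) hh hhm ?_ (by linarith)
  have key : π * (h * (2 * m - h)) ≤ 2 * (h + 1) ^ 2 * (2 * m + 1) := by
    nlinarith [pi_le_four, mul_nonneg hh' hgap, mul_nonneg (sq_nonneg ((h : ℝ) - 1)) hgap]
  rw [hp]
  exact mul_le_mul_of_nonneg_right key (sq_nonneg _)

theorem p_odd_le_pBound {j k h : ℕ} (hj : 0 < j) (hjh : 2 * j ≤ h) (hhm : h < 2 * (j + k)) :
    (p (2 * (j + k) + 1) (2 * j + 1) : ℝ) ≤ pBound (2 * (j + k) + 1) h := by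
  have hj1 : (1 : ℝ) ≤ j := by exact_mod_cast hj
  have hk : 0 < k := by omega
  have hjh' : 2 * (j : ℝ) ≤ h := by exact_mod_cast hjh
  refine le_pBound_of_pi_mul_sq_le (A := 2 * j * k) (B := (2 * j + 1) ^ 2)
    (by positivity) (by omega) hhm (by exact_mod_cast pi_mul_sq_p_odd_le j k) ?_
  push_cast
  nlinarith [mul_nonneg (sub_nonneg.2 hjh')
    (by nlinarith [mul_le_mul hjh' hj1 zero_le_one (by positivity)] :
      (0 : ℝ) ≤ 4 * h * j * (j + k + 1) + h + 2 * j - 2 * (j + k))]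

theorem p_even_le_pBound {j k h : ℕ} (hjh : 2 * (j + 1) ≤ h) (hhm : h < 2 * (j + k + 1)) :
    (p (2 * (j + k + 1) + 1) (2 * (j + 1)) : ℝ) ≤ pBound (2 * (j + k + 1) + 1) h := by
  have hjh' : 2 * (j : ℝ) + 2 ≤ h := by exact_mod_cast hjh
  have hgap : (0 : ℝ) ≤ 2 * (j + k + 1) - h := sub_nonneg.2 (by exact_mod_cast hhm.le)
  refine le_pBound_of_pi_mul_sq_le (A := 2 * (k + 1)) (B := 4 * (j + 1))
    (by positivity) (by omega) hhm (by exact_mod_cast pi_mul_sq_p_even_le j k) ?_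
  push_cast
  nlinarith [mul_nonneg (sub_nonneg.2 hjh') (mul_nonneg (by linarith : (0 : ℝ) ≤ h) hgap),
    mul_nonneg hgap (by linarith : (0 : ℝ) ≤ 2 * h + 1)]

open Real in
/-- Main quantitative bound in the proof of Theorem 1.2: for `n` odd,
`2 ≤ s ≤ ⌊n/2⌋`, `h` the largest even number not exceeding `s`, and every
`1 ≤ t ≤ s`, we have
`p(n,t) ≤ C(n-1, (n-1)/2) * √(2n(h+1)² / (π h (n-h-1)))`. -/
theorem p_sqrt_bound (n s h t : ℕ) (hn : Odd n) (hs1 : 2 ≤ s) (hs2 : s ≤ n / 2)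
    (hh : Even h ∧ h ≤ s ∧ s < h + 2) (ht1 : 1 ≤ t) (ht2 : t ≤ s) :
    (p n t : ℝ) ≤ ((n - 1).choose ((n - 1) / 2) : ℝ) *
      Real.sqrt (2 * n * (h + 1) ^ 2 / (π * h * ((n : ℝ) - h - 1))) := by
  obtain ⟨m, rfl⟩ := hn
  obtain ⟨⟨i, rfl⟩, hhs, hsh⟩ := hh
  change (p (2 * m + 1) t : ℝ) ≤ pBound (2 * m + 1) (i + i)
  rcases Nat.even_or_odd' t with ⟨j, rfl | rfl⟩
  · obtain ⟨j, rfl⟩ : ∃ j', j = j' + 1 := ⟨j - 1, by omega⟩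
    obtain ⟨k, rfl⟩ : ∃ k, m = j + k + 1 := ⟨m - j - 1, by omega⟩
    exact p_even_le_pBound (by omega) (by omega)
  · rcases Nat.eq_zero_or_pos j with rfl | hj
    · exact p_one_le_pBound (by omega) (by omega)
    · obtain ⟨k, rfl⟩ : ∃ k, m = j + k := ⟨m - j, by omega⟩
      exact p_odd_le_pBound hj (by omega) (by omega)
end

section
/- Let (a_n) and (b_n) be sequences of real numbers with lim_{n→∞} a_n = ∞ and lim_{n→∞} b_n = ∞. Then there exist strictly increasing functions φ, ψ : ℕ → ℕ such that a_{φ(n)} ≤ b_{ψ(n)} ≤ a_{φ(n+1)} for all n ∈ ℕ. -/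
open Filter in
/-- Constructive core of Proposition 2.8: from any two real sequences tending to
infinity one can extract interlaced subsequences, i.e. strictly increasing
`φ, ψ : ℕ → ℕ` with `a (φ n) ≤ b (ψ n) ≤ a (φ (n+1))` for all `n`. -/
theorem exists_interlaced_subsequences (a b : ℕ → ℝ)
    (ha : Tendsto a atTop atTop) (hb : Tendsto b atTop atTop) :
    ∃ φ ψ : ℕ → ℕ, StrictMono φ ∧ StrictMono ψ ∧
      ∀ n, a (φ n) ≤ b (ψ n) ∧ b (ψ n) ≤ a (φ (n + 1)) := by
  choose F hFge hFlt using fun (c : ℝ) (m : ℕ) =>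
    ((ha.eventually_ge_atTop c).and (eventually_ge_atTop (m + 1))).exists
  choose G hGge hGlt using fun (c : ℝ) (m : ℕ) =>
    ((hb.eventually_ge_atTop c).and (eventually_ge_atTop (m + 1))).exists
  set s : ℕ → ℕ × ℕ := fun n =>
    Nat.rec (0, G (a 0) 0)
      (fun _ p => (F (b p.2) p.1, G (a (F (b p.2) p.1)) p.2)) n with hs
  have hφsucc : ∀ n, (s (n + 1)).1 = F (b (s n).2) (s n).1 := fun n => rfl
  have hψsucc : ∀ n, (s (n + 1)).2 = G (a (s (n + 1)).1) (s n).2 := fun n => rfl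
  refine ⟨fun n => (s n).1, fun n => (s n).2, ?_, ?_, ?_⟩
  · apply strictMono_nat_of_lt_succ
    intro n
    rw [hφsucc]
    exact lt_of_lt_of_le (Nat.lt_succ_self _) (hFlt _ _)
  · apply strictMono_nat_of_lt_succ
    intro n
    rw [hψsucc]
    exact lt_of_lt_of_le (Nat.lt_succ_self _) (hGlt _ _)
  · intro n
    constructor
    · cases n with
      | zero => exact hGge (a ((s 0).1)) 0
      | succ k =>
        show a ((s (k+1)).1) ≤ b ((s (k+1)).2)
        rw [hψsucc]; exact hGge _ _
    · show b ((s n).2) ≤ a ((s (n+1)).1)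
      rw [hφsucc]; exact hFge _ _
end
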